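/- arXiv:1605.09772 — 2 statements merged into one kernel-verified Lean document; each statement's English description precedes it below -/
import Mathlib

section
/- Let E = (S, A_E, →_E, s₀) and M = (T, A_M, →_M, t₀) be LTSs. Suppose ⟨s,t⟩ is a state of the parallel composition E‖M reachable from ⟨s₀,t₀⟩ by a path of length at most k, and ⟨s,t⟩ →ᵃ ⟨s',t'⟩ is a transition of E‖M. Then: inl s ∈ q_k, inr t ∈ q_k, the label a is relaxed-enabled from q_k with some outcome, and both inl s' ∈ q_{k+1} and inr t' ∈ q_{k+1} (so every transition of E‖M from a reachable state gives rise to edges of the abstracting path graph). -/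
/-- A Labeled Transition System over state type `σ` and label type `Λ`:
an alphabet (set of labels), a transition relation contained in
`S × A × S`, and an initial state. -/
structure LTS (σ Λ : Type*) where
  alphabet : Set Λ
  trans : σ → Λ → σ → Prop
  init : σ
  trans_mem : ∀ {s a s'}, trans s a s' → a ∈ alphabet

variable {S T Λ : Type*}

/-- Transition relation of the parallel composition `E ‖ M`. -/
def ParTrans (E : LTS S Λ) (M : LTS T Λ) (p : S × T) (a : Λ) (p' : S × T) : Prop :=
  (a ∈ E.alphabet \ M.alphabet ∧ E.trans p.1 a p'.1 ∧ p'.2 = p.2) ∨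
  (a ∈ M.alphabet \ E.alphabet ∧ M.trans p.2 a p'.2 ∧ p'.1 = p.1) ∨
  (a ∈ E.alphabet ∩ M.alphabet ∧ E.trans p.1 a p'.1 ∧ M.trans p.2 a p'.2)

/-- Label `a` is relaxed-enabled from `q ⊆ S ⊎ T` with outcome `x'`. -/
def RelaxedEnabled (E : LTS S Λ) (M : LTS T Λ) (q : Set (S ⊕ T)) (a : Λ)
    (x' : S ⊕ T) : Prop :=
  (a ∈ E.alphabet \ M.alphabet ∧
    ∃ s s', Sum.inl s ∈ q ∧ E.trans s a s' ∧ x' = Sum.inl s') ∨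
  (a ∈ M.alphabet \ E.alphabet ∧
    ∃ t t', Sum.inr t ∈ q ∧ M.trans t a t' ∧ x' = Sum.inr t') ∨
  (a ∈ E.alphabet ∩ M.alphabet ∧
    ∃ s s' t t', Sum.inl s ∈ q ∧ Sum.inr t ∈ q ∧ E.trans s a s' ∧ M.trans t a t' ∧
      (x' = Sum.inl s' ∨ x' = Sum.inr t'))

/-- The abstracting-composition step function `F`. -/
def Fstep (E : LTS S Λ) (M : LTS T Λ) (q : Set (S ⊕ T)) : Set (S ⊕ T) :=
  q ∪ {x' | ∃ a, RelaxedEnabled E M q a x'}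

/-- The abstraction sequence `q_k = F^[k] {inl s₀, inr t₀}`. -/
def absSeq (E : LTS S Λ) (M : LTS T Λ) (k : ℕ) : Set (S ⊕ T) :=
  (Fstep E M)^[k] {Sum.inl E.init, Sum.inr M.init}

/-- `ℓ 0, …, ℓ (n-1)` is a finite trace of length `n` of `E ‖ M`. -/
def IsTrace (E : LTS S Λ) (M : LTS T Λ) (n : ℕ) (ℓ : ℕ → Λ) : Prop :=
  ∃ r : ℕ → S × T, r 0 = (E.init, M.init) ∧
    ∀ i < n, ParTrans E M (r i) (ℓ i) (r (i + 1))

/-- `ℓ 0, …, ℓ (n-1)` with witness states `x 0, …, x n` is an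
abstracting path of length `n` of the abstracting composition of `E` and `M`,
where `τ` is the special delay label. -/
def IsAbsPath (E : LTS S Λ) (M : LTS T Λ) (τ : Λ) (n : ℕ) (ℓ : ℕ → Λ)
    (x : ℕ → S ⊕ T) : Prop :=
  (∀ i < n, ℓ i ∈ E.alphabet ∪ M.alphabet ∪ {τ}) ∧
  (∀ i ≤ n, x i ∈ absSeq E M i) ∧
  (∀ i < n,
    (ℓ i = τ ∧ x (i + 1) = x i) ∨
    ((∃ y, RelaxedEnabled E M (absSeq E M i) (ℓ i) y) ∧
      ∃ u v u' v', ParTrans E M (u, v) (ℓ i) (u', v') ∧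
        (x i = Sum.inl u ∨ x i = Sum.inr v) ∧
        (x (i + 1) = Sum.inl u' ∨ x (i + 1) = Sum.inr v')))

/-- `p` is reachable from the initial state of `E ‖ M` by a path of length at most `k`. -/
def ReachableWithin (E : LTS S Λ) (M : LTS T Λ) (k : ℕ) (p : S × T) : Prop :=
  ∃ m ≤ k, ∃ r : ℕ → S × T, ∃ ℓ : ℕ → Λ,
    r 0 = (E.init, M.init) ∧ r m = p ∧
    ∀ i < m, ParTrans E M (r i) (ℓ i) (r (i + 1))

lemma absSeq_subset_succ (E : LTS S Λ) (M : LTS T Λ) (k : ℕ) :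
    absSeq E M k ⊆ absSeq E M (k + 1) := by
  unfold absSeq
  rw [Function.iterate_succ_apply']
  exact Set.subset_union_left

lemma absSeq_mono (E : LTS S Λ) (M : LTS T Λ) {j k : ℕ} (h : j ≤ k) :
    absSeq E M j ⊆ absSeq E M k := by
  induction k with
  | zero => simp [Nat.le_zero.mp h]
  | succ n ih =>
    rcases Nat.le_succ_iff.mp h with h' | h'
    · exact (ih h').trans (absSeq_subset_succ E M n)
    · exact h' ▸ subset_rfl

lemma step_mem (E : LTS S Λ) (M : LTS T Λ) (k : ℕ) {s s' t t' a}
    (hs : Sum.inl s ∈ absSeq E M k) (ht : Sum.inr t ∈ absSeq E M k)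
    (htrans : ParTrans E M (s, t) a (s', t')) :
    (∃ x', RelaxedEnabled E M (absSeq E M k) a x') ∧
    Sum.inl s' ∈ absSeq E M (k + 1) ∧ Sum.inr t' ∈ absSeq E M (k + 1) := by
  have hF : ∀ x', RelaxedEnabled E M (absSeq E M k) a x' → x' ∈ absSeq E M (k + 1) := by
    intro x' hx'
    unfold absSeq
    rw [Function.iterate_succ_apply']
    exact Or.inr ⟨a, hx'⟩
  rcases htrans with ⟨ha, he, heq⟩ | ⟨ha, hm, heq⟩ | ⟨ha, he, hm⟩
  · have h1 : RelaxedEnabled E M (absSeq E M k) a (Sum.inl s') :=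
      Or.inl ⟨ha, s, s', hs, he, rfl⟩
    refine ⟨⟨_, h1⟩, hF _ h1, ?_⟩
    simp only at heq
    exact heq ▸ absSeq_subset_succ E M k ht
  · have h1 : RelaxedEnabled E M (absSeq E M k) a (Sum.inr t') :=
      Or.inr (Or.inl ⟨ha, t, t', ht, hm, rfl⟩)
    refine ⟨⟨_, h1⟩, ?_, hF _ h1⟩
    simp only at heq
    exact heq ▸ absSeq_subset_succ E M k hs
  · have h1 : RelaxedEnabled E M (absSeq E M k) a (Sum.inl s') :=
      Or.inr (Or.inr ⟨ha, s, s', t, t', hs, ht, he, hm, Or.inl rfl⟩)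
    have h2 : RelaxedEnabled E M (absSeq E M k) a (Sum.inr t') :=
      Or.inr (Or.inr ⟨ha, s, s', t, t', hs, ht, he, hm, Or.inr rfl⟩)
    exact ⟨⟨_, h1⟩, hF _ h1, hF _ h2⟩

lemma reach_mem (E : LTS S Λ) (M : LTS T Λ) (r : ℕ → S × T) (ℓ : ℕ → Λ)
    (h0 : r 0 = (E.init, M.init)) (m : ℕ)
    (hstep : ∀ i < m, ParTrans E M (r i) (ℓ i) (r (i + 1))) :
    Sum.inl (r m).1 ∈ absSeq E M m ∧ Sum.inr (r m).2 ∈ absSeq E M m := by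
  induction m with
  | zero => simp [h0, absSeq]
  | succ n ih =>
    obtain ⟨hs, ht⟩ := ih (fun i hi => hstep i (hi.trans (Nat.lt_succ_self n)))
    have htr := hstep n (Nat.lt_succ_self n)
    have := step_mem E M n hs ht (s' := (r (n+1)).1) (t' := (r (n+1)).2) htr
    exact ⟨this.2.1, this.2.2⟩

/-- Every transition of `E ‖ M` from a state reachable within `k` steps gives
rise to edges of the abstracting path graph: the source states lie in `q k`,
the label is relaxed-enabled from `q k`, and the target states lie in `q (k+1)`. -/
theorem transition_gives_edges (E : LTS S Λ) (M : LTS T Λ) (k : ℕ)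
    (s s' : S) (t t' : T) (a : Λ)
    (hreach : ReachableWithin E M k (s, t))
    (htrans : ParTrans E M (s, t) a (s', t')) :
    Sum.inl s ∈ absSeq E M k ∧ Sum.inr t ∈ absSeq E M k ∧
    (∃ x', RelaxedEnabled E M (absSeq E M k) a x') ∧
    Sum.inl s' ∈ absSeq E M (k + 1) ∧ Sum.inr t' ∈ absSeq E M (k + 1) := by
  obtain ⟨m, hm, r, ℓ, h0, hrm, hstep⟩ := hreach
  obtain ⟨hs, ht⟩ := reach_mem E M r ℓ h0 m hstep
  rw [hrm] at hs ht
  have hs' := absSeq_mono E M hm hs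
  have ht' := absSeq_mono E M hm ht
  obtain ⟨h1, h2, h3⟩ := step_mem E M k hs' ht' htrans
  exact ⟨hs', ht', h1, h2, h3⟩
end

section
/- Let E = (S, A_E, →_E, s₀) and M = (T, A_M, →_M, t₀) be LTSs, and for x ∈ S ⊎ T define the generation gen(x) as the least k ∈ ℕ with x ∈ q_k, whenever such k exists. If gen(x) = g, then there exists an abstracting path of the abstracting composition of E and M of length g whose final state is x (i.e., with witness states x₀, …, x_g satisfying x_g = x). -/
variable {S T Λ : Type*}

lemma absSeq_succ (E : LTS S Λ) (M : LTS T Λ) (k : ℕ) :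
    absSeq E M (k + 1) = Fstep E M (absSeq E M k) :=
  Function.iterate_succ_apply' _ _ _

lemma relaxed_to_step (E : LTS S Λ) (M : LTS T Λ) {q : Set (S ⊕ T)} {a : Λ} {x : S ⊕ T}
    (h : RelaxedEnabled E M q a x) :
    ∃ y ∈ q, ∃ u v u' v', ParTrans E M (u, v) a (u', v') ∧
      (y = Sum.inl u ∨ y = Sum.inr v) ∧ (x = Sum.inl u' ∨ x = Sum.inr v') ∧
      a ∈ E.alphabet ∪ M.alphabet := by
  rcases h with ⟨ha, s, s', hs, ht, hx⟩ | ⟨ha, t, t', hs, ht, hx⟩ |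
    ⟨ha, s, s', t, t', hs, htq, hts, htt, hx⟩
  · exact ⟨Sum.inl s, hs, s, M.init, s', M.init,
      Or.inl ⟨ha, ht, rfl⟩, Or.inl rfl, Or.inl hx, Or.inl ha.1⟩
  · exact ⟨Sum.inr t, hs, E.init, t, E.init, t',
      Or.inr (Or.inl ⟨ha, ht, rfl⟩), Or.inr rfl, Or.inr hx, Or.inr ha.1⟩
  · exact ⟨Sum.inl s, hs, s, t, s', t',
      Or.inr (Or.inr ⟨ha, hts, htt⟩), Or.inl rfl, hx, Or.inl ha.1⟩

lemma absPath_aux (E : LTS S Λ) (M : LTS T Λ) (τ : Λ) :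
    ∀ g (x : S ⊕ T), x ∈ absSeq E M g →
      ∃ ℓ : ℕ → Λ, ∃ xs : ℕ → S ⊕ T, IsAbsPath E M τ g ℓ xs ∧ xs g = x := by
  intro g
  induction g with
  | zero =>
    intro x hx
    refine ⟨fun _ => τ, fun _ => x, ⟨?_, ?_, ?_⟩, rfl⟩
    · intro i hi; omega
    · intro i hi; interval_cases i; exact hx
    · intro i hi; omega
  | succ g ih =>
    intro x hx
    rw [absSeq_succ] at hx
    have key : ∀ (y : S ⊕ T) (b : Λ), y ∈ absSeq E M g → b ∈ E.alphabet ∪ M.alphabet ∪ {τ} →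
        ((b = τ ∧ x = y) ∨
          ((∃ z, RelaxedEnabled E M (absSeq E M g) b z) ∧
            ∃ u v u' v', ParTrans E M (u, v) b (u', v') ∧
              (y = Sum.inl u ∨ y = Sum.inr v) ∧ (x = Sum.inl u' ∨ x = Sum.inr v'))) →
        x ∈ absSeq E M (g + 1) →
        ∃ ℓ : ℕ → Λ, ∃ xs : ℕ → S ⊕ T, IsAbsPath E M τ (g + 1) ℓ xs ∧ xs (g + 1) = x := by
      intro y b hyq hbmem hstep hxmem
      obtain ⟨ℓ, xs, ⟨h1, h2, h3⟩, hend⟩ := ih y hyq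
      refine ⟨fun i => if i = g then b else ℓ i,
        fun i => if i = g + 1 then x else xs i, ⟨?_, ?_, ?_⟩, if_pos rfl⟩
      · intro i hi
        by_cases h : i = g
        · simpa [h] using hbmem
        · simpa [h] using h1 i (by omega)
      · intro i hi
        by_cases h : i = g + 1
        · subst h; simpa using hxmem
        · simpa [h] using h2 i (by omega)
      · intro i hi
        by_cases h : i = g
        · have e1 : (fun j => if j = g then b else ℓ j) i = b := if_pos h
          have e2 : (fun j => if j = g + 1 then x else xs j) (i + 1) = x :=
            if_pos (by omega)
          have e3 : (fun j => if j = g + 1 then x else xs j) i = y := by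
            show (if i = g + 1 then x else xs i) = y
            rw [if_neg (by omega : ¬ i = g + 1), h]
            exact hend
          simp only [e1, e2, e3]
          rw [h]
          exact hstep
        · have hi' : i < g := by omega
          have e1 : (fun j => if j = g then b else ℓ j) i = ℓ i := if_neg h
          have e2 : (fun j => if j = g + 1 then x else xs j) (i + 1) = xs (i + 1) :=
            if_neg (by omega)
          have e3 : (fun j => if j = g + 1 then x else xs j) i = xs i := if_neg (by omega)
          simp only [e1, e2, e3]
          exact h3 i hi'
    rcases hx with hx | ⟨a, hrel⟩
    · exact key x τ hx (by simp) (Or.inl ⟨rfl, rfl⟩)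
        (by rw [absSeq_succ]; exact Or.inl hx)
    · obtain ⟨y, hyq, u, v, u', v', hpt, hy, hx', haab⟩ := relaxed_to_step E M hrel
      exact key y a hyq (Or.inl haab)
        (Or.inr ⟨⟨x, hrel⟩, u, v, u', v', hpt, hy, hx'⟩)
        (by rw [absSeq_succ]; exact Or.inr ⟨a, hrel⟩)

/-- If `g` is the generation of `x` (the least `k` with `x ∈ q k`), then
there is an abstracting path of length `g` whose final witness state is `x`. -/
theorem absPath_of_generation (E : LTS S Λ) (M : LTS T Λ) (τ : Λ)
    (hτ : τ ∉ E.alphabet ∪ M.alphabet) (x : S ⊕ T) (g : ℕ)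
    (hmem : x ∈ absSeq E M g) (hleast : ∀ j < g, x ∉ absSeq E M j) :
    ∃ ℓ : ℕ → Λ, ∃ xs : ℕ → S ⊕ T, IsAbsPath E M τ g ℓ xs ∧ xs g = x := by
  exact absPath_aux E M τ g x hmem
end
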